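/- Let V₀ → V₁ → ⋯ be refinements with inclusion maps i_s : V_s → Q(U_s) satisfying Q(h_s) ∘ i_s = i_{s+1} ∘ g_s for morphisms g_s : V_s → V_{s+1} and h_s : U_s → U_{s+1}. Define F on Čech 2-cochains by F(φ)(g₁,g₂) = φ(i₀, Q(h₁), Q(h₂)) − φ(g₁, i₁, Q(h₂)) + φ(g₁, g₂, i₂). Then (μ∘λ − id)(φ)(g₁,g₂) = (δF + Fδ)(φ)(g₁,g₂), where δ is the Čech differential, μ(φ)(g₁,g₂) = φ(Q(h₁),Q(h₂))|_{V₀}, and λ evaluates on full charts. -/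
import Mathlib


open CategoryTheory Opposite

/-- The explicit degree-2 case of the chain homotopy from the Appendix, for Čech
cochains valued in an arbitrary presheaf `F` of real vector spaces on a category.

Data: objects `V₀, V₁, V₂` (refined cover) and `U₀, U₁, U₂` (with `Uₛ` playing the
role of `Q(Uₛ)`), morphisms `g₁ : V₀ ⟶ V₁`, `g₂ : V₁ ⟶ V₂`, `H₁ : U₀ ⟶ U₁`,
`H₂ : U₁ ⟶ U₂` (the `Q(hₛ)`), and inclusions `iₛ : Vₛ ⟶ Uₛ` satisfying
`Q(hₛ) ∘ iₛ = iₛ₊₁ ∘ gₛ`.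

For a 2-cochain `φ` (assigning to each pair of composable morphisms an element of
`F` at the source, pullbacks being `F.map ·.op`), with
 * `(μ∘λ)(φ)(g₁,g₂) = φ(H₁,H₂)|_{V₀} = F.map i₀.op (φ H₁ H₂)`,
 * the homotopy `F(ψ)(g) = ψ(i, H) − ψ(g, i')` on 1-strings (alternating sum over
   insertion positions of the inclusion), so that
   `δ(F(φ))(g₁,g₂) = F.map g₁.op (F(φ)(g₂)) − F(φ)(g₁g₂) + F(φ)(g₁)` and
   `F(δφ)(g₁,g₂) = δφ(i₀,H₁,H₂) − δφ(g₁,i₁,H₂) + δφ(g₁,g₂,i₂)`,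
 * `δ` the Čech differential, `δφ(a,b,c) = a*φ(b,c) − φ(ab,c) + φ(a,bc) − φ(a,b)`,
the chain homotopy identity `(μ∘λ − id)(φ)(g₁,g₂) = (δ(Fφ) + F(δφ))(g₁,g₂)` holds. -/
theorem stmt17 (𝒞 : Type) [Category 𝒞] (F : 𝒞ᵒᵖ ⥤ ModuleCat ℝ)
    (V₀ V₁ V₂ U₀ U₁ U₂ : 𝒞)
    (g₁ : V₀ ⟶ V₁) (g₂ : V₁ ⟶ V₂)
    (H₁ : U₀ ⟶ U₁) (H₂ : U₁ ⟶ U₂)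
    (i₀ : V₀ ⟶ U₀) (i₁ : V₁ ⟶ U₁) (i₂ : V₂ ⟶ U₂)
    (sq₁ : i₀ ≫ H₁ = g₁ ≫ i₁) (sq₂ : i₁ ≫ H₂ = g₂ ≫ i₂)
    -- a Čech 2-cochain on the category of charts:
    (φ : ∀ ⦃A B C : 𝒞⦄, (A ⟶ B) → (B ⟶ C) → (F.obj (op A)))
    -- δφ, the Čech differential of φ, evaluated on a 3-string (a,b,c):
    (δφ : ∀ ⦃A B C D : 𝒞⦄, (A ⟶ B) → (B ⟶ C) → (C ⟶ D) → (F.obj (op A)))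
    (hδφ : ∀ ⦃A B C D : 𝒞⦄ (a : A ⟶ B) (b : B ⟶ C) (c : C ⟶ D),
      δφ a b c = F.map a.op (φ b c) - φ (a ≫ b) c + φ a (b ≫ c) - φ a b) :
    -- (μ∘λ − id)(φ)(g₁,g₂) = δ(F(φ))(g₁,g₂) + F(δφ)(g₁,g₂):
    F.map i₀.op (φ H₁ H₂) - φ g₁ g₂ =
      (F.map g₁.op (φ i₁ H₂ - φ g₂ i₂)
        - (φ i₀ (H₁ ≫ H₂) - φ (g₁ ≫ g₂) i₂)
        + (φ i₀ H₁ - φ g₁ i₁))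
      + (δφ i₀ H₁ H₂ - δφ g₁ i₁ H₂ + δφ g₁ g₂ i₂) := by
  rw [hδφ, hδφ, hδφ, sq₁, sq₂, map_sub]
  abel
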